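/- arXiv:1908.05590 — 6 statements merged into one kernel-verified Lean document; each statement's English description precedes it below -/
import Mathlib

section
/- Let n, k be positive integers, let λ : ℝ^k → ℝ^n be a map that is differentiable at the point u, and consider the vector fields on ℝ^n × ℝ^k given by X₀(x,u) = ((λ₁(u)x₁, …, λₙ(u)xₙ), 0) and, for a fixed multi-index α ∈ ℕ^n and a fixed index i ∈ {1,…,k}, U(x,u) = (0, x^α f_i), where x^α = x₁^{α₁}⋯xₙ^{αₙ} and f_i is the i-th standard basis vector of ℝ^k. Then for every point (x,u) the Lie bracket satisfies [X₀, U](x,u) = ( −x^α · (μ₁(u)x₁, …, μₙ(u)xₙ), ⟨λ(u), α⟩ · x^α · f_i ), where μ(u) = Dλ(u)[f_i] ∈ ℝ^n is the derivative of λ at u in the direction f_i and ⟨λ(u), α⟩ = Σ_{j=1}^n α_j λ_j(u). In particular the x-component of the bracket is homogeneous in x of degree |α| + 1, one higher than the degree |α| of U. -/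
/-!
Neither field mixes its two blocks: `X₀` has no `u`-component and `U` has no `x`-component.
Hence `DU[X₀]` is `(0, D(x^α)[λ(u) ⊙ x] f_i)`, which Euler's identity for monomials,
`D(x^α)[c ⊙ x] = ⟨c, α⟩ x^α`, turns into `⟨λ(u), α⟩ x^α f_i`, while `DX₀[U]` only sees the
`u`-derivative of `λ` and equals `(x^α (μ_j x_j)_j, 0)`. Homogeneity then comes from
`(c x)^α = c^{|α|} x^α`.
-/

open ContinuousLinearMap

section
variable {𝕜 ι F : Type*} [NontriviallyNormedField 𝕜] [Fintype ι]
  [NormedAddCommGroup F] [NormedSpace 𝕜 F]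

theorem fderiv_coord_pow_apply_mul_self (a : ℕ) (l : ι) (c x : ι → 𝕜) :
    fderiv 𝕜 (fun y : ι → 𝕜 => y l ^ a) x (fun j => c j * x j) = a * c l * x l ^ a := by
  have hl : HasFDerivAt (fun y : ι → 𝕜 => y l) (proj (R := 𝕜) l) x :=
    hasFDerivAt_apply l x
  rw [(hl.pow a).fderiv]
  rcases eq_or_ne a 0 with rfl | ha
  · simp
  · simp only [smul_apply, proj_apply, smul_eq_mul]
    rw [← pow_sub_one_mul ha (x l)]
    ring

theorem fderiv_monomial_apply_mul_self (α : ι → ℕ) (c x : ι → 𝕜) :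
    fderiv 𝕜 (fun y : ι → 𝕜 => ∏ l, y l ^ α l) x (fun j => c j * x j) =
      (∑ l, (α l : 𝕜) * c l) * ∏ l, x l ^ α l := by
  classical
  rw [fderiv_finsetProd fun l _ => by fun_prop]
  simp only [FunLike.coe_sum, Finset.sum_apply, smul_apply, smul_eq_mul,
    fderiv_coord_pow_apply_mul_self, Finset.sum_mul]
  refine Finset.sum_congr rfl fun l hl => ?_
  rw [← Finset.mul_prod_erase _ (fun j => x j ^ α j) hl]
  ring

theorem fderiv_diagonalField_apply {lam : F → ι → 𝕜} {u : F} (hlam : DifferentiableAt 𝕜 lam u)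
    (x v : ι → 𝕜) (w : F) :
    fderiv 𝕜 (fun p : (ι → 𝕜) × F => ((fun j => lam p.2 j * p.1 j : ι → 𝕜), (0 : F))) (x, u)
      (v, w) = (fun j => lam u j * v j + fderiv 𝕜 lam u w j * x j, 0) := by
  have hcoord (j : ι) : HasFDerivAt (fun p : (ι → 𝕜) × F => lam p.2 j * p.1 j)
      (lam u j • (proj j ∘L fst 𝕜 _ F) + x j • (proj j ∘L fderiv 𝕜 lam u ∘L snd 𝕜 _ F)) (x, u) := by
    have hl : HasFDerivAt (fun p : (ι → 𝕜) × F => lam p.2) (fderiv 𝕜 lam u ∘L snd 𝕜 _ F) (x, u) :=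
      hlam.hasFDerivAt.comp (x, u) hasFDerivAt_snd
    have hx : HasFDerivAt (fun p : (ι → 𝕜) × F => p.1 j) (proj j ∘L fst 𝕜 _ F) (x, u) :=
      hasFDerivAt_pi'.1 hasFDerivAt_fst j
    exact (hasFDerivAt_pi'.1 hl j).mul hx
  rw [((hasFDerivAt_pi.2 hcoord).prodMk (hasFDerivAt_const 0 _)).fderiv]
  ext j <;> simp [mul_comm]

theorem fderiv_monomialField_apply (α : ι → ℕ) (e : F) (x v : ι → 𝕜) (u w : F) :
    fderiv 𝕜 (fun p : (ι → 𝕜) × F => ((0 : ι → 𝕜), (∏ l, p.1 l ^ α l) • e)) (x, u) (v, w) =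
      (0, fderiv 𝕜 (fun y : ι → 𝕜 => ∏ l, y l ^ α l) x v • e) := by
  have hm : HasFDerivAt (fun p : (ι → 𝕜) × F => ∏ l, p.1 l ^ α l)
      (fderiv 𝕜 (fun y : ι → 𝕜 => ∏ l, y l ^ α l) x ∘L fst 𝕜 _ F) (x, u) :=
    HasFDerivAt.comp (g := fun y : ι → 𝕜 => ∏ l, y l ^ α l) (x, u)
      (DifferentiableAt.hasFDerivAt (by fun_prop)) hasFDerivAt_fst
  rw [((hasFDerivAt_const 0 _).prodMk (hm.smul_const e)).fderiv]
  simp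

theorem lieBracket_diagonalField_monomialField {lam : F → ι → 𝕜} {u : F}
    (hlam : DifferentiableAt 𝕜 lam u) (α : ι → ℕ) (e : F) (x : ι → 𝕜) :
    VectorField.lieBracket 𝕜
        (fun p : (ι → 𝕜) × F => ((fun j => lam p.2 j * p.1 j : ι → 𝕜), (0 : F)))
        (fun p => ((0 : ι → 𝕜), (∏ l, p.1 l ^ α l) • e)) (x, u) =
      ((-(∏ l, x l ^ α l)) • (fun j => fderiv 𝕜 lam u e j * x j : ι → 𝕜),
        (∑ j, (α j : 𝕜) * lam u j) • (∏ l, x l ^ α l) • e) := by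
  rw [VectorField.lieBracket, fderiv_monomialField_apply, fderiv_diagonalField_apply hlam,
    fderiv_monomial_apply_mul_self]
  ext j <;> simp [smul_smul, mul_assoc]

theorem prod_smul_apply_pow (α : ι → ℕ) (c : 𝕜) (x : ι → 𝕜) :
    ∏ l, (c • x) l ^ α l = c ^ (∑ l, α l) * ∏ l, x l ^ α l := by
  simp only [Pi.smul_apply, smul_eq_mul, mul_pow, Finset.prod_mul_distrib,
    Finset.prod_pow_eq_pow_sum]

end

theorem lieBracket_monomial_u_direction_general (n k : ℕ)
    (lam : (Fin k → ℝ) → (Fin n → ℝ)) (α : Fin n → ℕ) (i : Fin k)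
    (X₀ U : ((Fin n → ℝ) × (Fin k → ℝ)) → ((Fin n → ℝ) × (Fin k → ℝ)))
    (hX₀ : ∀ p, X₀ p = ((fun j => lam p.2 j * p.1 j : Fin n → ℝ), (0 : Fin k → ℝ)))
    (hU : ∀ p, U p = ((0 : Fin n → ℝ),
      (∏ l, p.1 l ^ α l) • (Pi.single i (1 : ℝ) : Fin k → ℝ))) :
    ∀ (x : Fin n → ℝ) (u : Fin k → ℝ), DifferentiableAt ℝ lam u →
      (VectorField.lieBracket ℝ X₀ U (x, u) =
        ((-(∏ l, x l ^ α l)) •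
            (fun j => fderiv ℝ lam u (Pi.single i (1 : ℝ)) j * x j : Fin n → ℝ),
          (∑ j, (α j : ℝ) * lam u j) •
            (∏ l, x l ^ α l) • (Pi.single i (1 : ℝ) : Fin k → ℝ))) ∧
      ∀ c : ℝ, (VectorField.lieBracket ℝ X₀ U (c • x, u)).1 =
          c ^ ((∑ j, α j) + 1) • (VectorField.lieBracket ℝ X₀ U (x, u)).1 := by
  intro x u hlam
  obtain rfl : X₀ = _ := funext hX₀
  obtain rfl : U = _ := funext hU
  refine ⟨lieBracket_diagonalField_monomialField hlam α _ x, fun c => ?_⟩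
  rw [lieBracket_diagonalField_monomialField hlam, lieBracket_diagonalField_monomialField hlam,
    prod_smul_apply_pow]
  ext j
  simp only [Pi.smul_apply, smul_eq_mul, pow_succ]
  ring

/-- For `X₀(x,u) = (diag(λ(u)) x, 0)` and `U(x,u) = (0, x^α f_i)` (a monomial vector field in a
centre direction), the Lie bracket is
`[X₀, U](x,u) = (−x^α (μ₁(u)x₁, …, μₙ(u)xₙ), ⟨λ(u), α⟩ x^α f_i)` with `μ(u) = Dλ(u)[f_i]`.
In particular the `x`-component is homogeneous in `x` of degree `|α| + 1`. -/
theorem lieBracket_monomial_u_direction (n k : ℕ) (hn : 0 < n) (hk : 0 < k)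
    (lam : (Fin k → ℝ) → (Fin n → ℝ)) (α : Fin n → ℕ) (i : Fin k)
    (X₀ U : ((Fin n → ℝ) × (Fin k → ℝ)) → ((Fin n → ℝ) × (Fin k → ℝ)))
    (hX₀ : ∀ p, X₀ p = ((fun j => lam p.2 j * p.1 j : Fin n → ℝ), (0 : Fin k → ℝ)))
    (hU : ∀ p, U p = ((0 : Fin n → ℝ),
      (∏ l, p.1 l ^ α l) • (Pi.single i (1 : ℝ) : Fin k → ℝ))) :
    ∀ (x : Fin n → ℝ) (u : Fin k → ℝ), DifferentiableAt ℝ lam u →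
      (VectorField.lieBracket ℝ X₀ U (x, u) =
        ((-(∏ l, x l ^ α l)) •
            (fun j => fderiv ℝ lam u (Pi.single i (1 : ℝ)) j * x j : Fin n → ℝ),
          (∑ j, (α j : ℝ) * lam u j) •
            (∏ l, x l ^ α l) • (Pi.single i (1 : ℝ) : Fin k → ℝ))) ∧
      ∀ c : ℝ, (VectorField.lieBracket ℝ X₀ U (c • x, u)).1 =
          c ^ ((∑ j, α j) + 1) • (VectorField.lieBracket ℝ X₀ U (x, u)).1 :=
  lieBracket_monomial_u_direction_general n k lam α i X₀ U hX₀ hU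
end

section
/- Fix α, β ∈ ℝ and let A be the ℝ-subalgebra of the algebra of functions ℝ → ℝ (with pointwise operations) generated by the five functions t ↦ t, t ↦ e^{αt}, t ↦ e^{−αt}, t ↦ e^{βt}, t ↦ e^{−βt}. If P ∈ A, then the function t ↦ ∫₀ᵗ P(τ) dτ also belongs to A. -/
/-!
The algebra is spanned by the monomials `tⁿ e^{γt}`, with `γ` in the additive monoid generated
by `±α, ±β`, and each monomial has an antiderivative in that span: `tⁿ⁺¹/(n+1)` when `γ = 0`,
and otherwise one obtained by induction on `n` from
`(tⁿ⁺¹ e^{γt})' = (n+1) tⁿ e^{γt} + γ tⁿ⁺¹ e^{γt}`.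
The integral from `0` differs from such an antiderivative by a constant.
-/

open Real intervalIntegral

lemma hasDerivAt_exp_mul (γ t : ℝ) : HasDerivAt (fun x => exp (γ * x)) (γ * exp (γ * t)) t := by
  simpa [mul_comm] using ((hasDerivAt_id t).const_mul γ).exp

noncomputable def expMonomial (n : ℕ) (γ : ℝ) : ℝ → ℝ := fun t => t ^ n * exp (γ * t)

lemma expMonomial_mul (n m : ℕ) (γ δ : ℝ) :
    expMonomial n γ * expMonomial m δ = expMonomial (n + m) (γ + δ) := by
  funext t
  simp only [expMonomial, Pi.mul_apply, pow_add, add_mul, exp_add]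
  ring

lemma expMonomial_zero_zero : expMonomial 0 0 = 1 := by
  funext t
  simp [expMonomial]

lemma expMonomial_zero_left (γ : ℝ) : expMonomial 0 γ = fun t => exp (γ * t) := by
  funext t
  simp [expMonomial]

lemma continuous_expMonomial (n : ℕ) (γ : ℝ) : Continuous (expMonomial n γ) := by
  unfold expMonomial
  fun_prop

lemma hasDerivAt_expMonomial_zero (γ t : ℝ) :
    HasDerivAt (expMonomial 0 γ) (γ * expMonomial 0 γ t) t := by
  unfold expMonomial
  simpa using hasDerivAt_exp_mul γ t

lemma hasDerivAt_expMonomial_succ (n : ℕ) (γ t : ℝ) :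
    HasDerivAt (expMonomial (n + 1) γ)
      ((n + 1) * expMonomial n γ t + γ * expMonomial (n + 1) γ t) t := by
  unfold expMonomial
  refine ((hasDerivAt_pow (n + 1) t).fun_mul (hasDerivAt_exp_mul γ t)).congr_deriv ?_
  push_cast
  ring

noncomputable def expMonomials (G : AddSubmonoid ℝ) : Submonoid (ℝ → ℝ) where
  carrier := {f | ∃ n, ∃ γ ∈ G, expMonomial n γ = f}
  mul_mem' := by
    rintro _ _ ⟨n, γ, hγ, rfl⟩ ⟨m, δ, hδ, rfl⟩
    exact ⟨n + m, γ + δ, G.add_mem hγ hδ, (expMonomial_mul n m γ δ).symm⟩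
  one_mem' := ⟨0, 0, G.zero_mem, expMonomial_zero_zero⟩

def derivativesOf (A : Submodule ℝ (ℝ → ℝ)) : Submodule ℝ (ℝ → ℝ) where
  carrier := {f | ∃ g ∈ A, ∀ x, HasDerivAt g (f x) x}
  add_mem' := by
    rintro f₁ f₂ ⟨g₁, hg₁, h₁⟩ ⟨g₂, hg₂, h₂⟩
    exact ⟨g₁ + g₂, add_mem hg₁ hg₂, fun x => (h₁ x).add (h₂ x)⟩
  zero_mem' := ⟨0, zero_mem A, fun x => hasDerivAt_const x 0⟩
  smul_mem' := by
    rintro c f ⟨g, hg, h⟩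
    exact ⟨c • g, A.smul_mem c hg, fun x => (h x).const_smul c⟩

lemma primitive_mem_of_mem_derivativesOf {A : Submodule ℝ (ℝ → ℝ)} (hA : 1 ∈ A) {f : ℝ → ℝ}
    (hf : Continuous f) (hfA : f ∈ derivativesOf A) :
    (fun t => ∫ τ in (0 : ℝ)..t, f τ) ∈ A := by
  obtain ⟨g, hg, hderiv⟩ := hfA
  have : (fun t => ∫ τ in (0 : ℝ)..t, f τ) = g - g 0 • 1 := by
    funext t
    simp [integral_eq_sub_of_hasDerivAt (fun x _ => hderiv x) (hf.intervalIntegrable 0 t)]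
  rw [this]
  exact sub_mem hg (A.smul_mem _ hA)

lemma expMonomial_mem_derivativesOf {A : Submodule ℝ (ℝ → ℝ)} {γ : ℝ}
    (hA : ∀ m, expMonomial m γ ∈ A) (n : ℕ) : expMonomial n γ ∈ derivativesOf A := by
  have hsucc (m : ℕ) :
      (m + 1 : ℝ) • expMonomial m γ + γ • expMonomial (m + 1) γ ∈ derivativesOf A :=
    ⟨_, hA (m + 1), hasDerivAt_expMonomial_succ m γ⟩
  rcases eq_or_ne γ 0 with rfl | hγ
  · have := hsucc n
    rw [zero_smul, add_zero, Submodule.smul_mem_iff _ n.cast_add_one_ne_zero] at this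
    exact this
  · rw [← Submodule.smul_mem_iff _ hγ]
    induction n with
    | zero => exact ⟨_, hA 0, hasDerivAt_expMonomial_zero γ⟩
    | succ m ih =>
      have := sub_mem (hsucc m) (Submodule.smul_mem _ ((m + 1 : ℝ) * γ⁻¹) ih)
      convert this using 1
      rw [smul_smul, inv_mul_cancel_right₀ hγ, add_sub_cancel_left]

theorem primitive_mem_adjoin_expMonomials (G : AddSubmonoid ℝ) {P : ℝ → ℝ}
    (hP : P ∈ Algebra.adjoin ℝ (expMonomials G : Set (ℝ → ℝ))) :
    (fun t => ∫ τ in (0 : ℝ)..t, P τ) ∈ Algebra.adjoin ℝ (expMonomials G : Set (ℝ → ℝ)) := by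
  set A := Algebra.adjoin ℝ (expMonomials G : Set (ℝ → ℝ))
  have hspan : P ∈ Submodule.span ℝ (expMonomials G : Set (ℝ → ℝ)) := by
    rw [← Submonoid.closure_eq (expMonomials G), ← Algebra.adjoin_eq_span]
    exact hP
  have hcont : Continuous P :=
    Algebra.adjoin_le (S := continuousSubalgebra)
      (by rintro _ ⟨n, γ, -, rfl⟩; exact continuous_expMonomial n γ) hP
  have hderiv : P ∈ derivativesOf (Subalgebra.toSubmodule A) := by
    refine Submodule.span_le.mpr ?_ hspan
    rintro _ ⟨n, γ, hγ, rfl⟩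
    exact expMonomial_mem_derivativesOf (A := Subalgebra.toSubmodule A)
      (fun m => Algebra.subset_adjoin ⟨m, γ, hγ, rfl⟩) n
  exact primitive_mem_of_mem_derivativesOf A.one_mem hcont hderiv

lemma expMonomials_closure_subset {A : Subalgebra ℝ (ℝ → ℝ)} {s : Set ℝ}
    (hX : (fun t => t) ∈ A) (hs : ∀ γ ∈ s, expMonomial 0 γ ∈ A) :
    (expMonomials (AddSubmonoid.closure s) : Set (ℝ → ℝ)) ⊆ A := by
  rintro _ ⟨n, γ, hγ, rfl⟩
  have hexp : expMonomial 0 γ ∈ A := by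
    induction hγ using AddSubmonoid.closure_induction with
    | mem γ hγ => exact hs γ hγ
    | zero => exact expMonomial_zero_zero ▸ A.one_mem
    | add γ δ _ _ hγ hδ => exact expMonomial_mul 0 0 γ δ ▸ A.mul_mem hγ hδ
  have hpow : expMonomial n 0 = (fun t => t) ^ n := by
    funext t
    simp [expMonomial]
  have := A.mul_mem (hpow ▸ pow_mem hX n) hexp
  rwa [expMonomial_mul, add_zero, zero_add] at this

lemma adjoin_exp_eq_adjoin_expMonomials (α β : ℝ) :
    Algebra.adjoin ℝ
      ({fun t => t, fun t => Real.exp (α * t), fun t => Real.exp (-α * t),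
        fun t => Real.exp (β * t), fun t => Real.exp (-β * t)} : Set (ℝ → ℝ)) =
      Algebra.adjoin ℝ
        (expMonomials (AddSubmonoid.closure {α, -α, β, -β}) : Set (ℝ → ℝ)) := by
  apply le_antisymm
  · refine Algebra.adjoin_le ?_
    have hexp {γ : ℝ} (hγ : γ ∈ ({α, -α, β, -β} : Set ℝ)) :
        (fun t => Real.exp (γ * t)) ∈ Algebra.adjoin ℝ
          (expMonomials (AddSubmonoid.closure {α, -α, β, -β}) : Set (ℝ → ℝ)) :=
      Algebra.subset_adjoin ⟨0, γ, AddSubmonoid.subset_closure hγ, expMonomial_zero_left γ⟩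
    rintro f (rfl | rfl | rfl | rfl | rfl)
    · exact Algebra.subset_adjoin ⟨1, 0, zero_mem _, by funext t; simp [expMonomial]⟩
    all_goals exact hexp (by simp)
  · refine Algebra.adjoin_le (expMonomials_closure_subset (Algebra.subset_adjoin (by simp)) ?_)
    intro γ hγ
    rw [expMonomial_zero_left]
    apply Algebra.subset_adjoin
    rcases hγ with rfl | rfl | rfl | rfl <;> simp

/-- The ring `R_{α,β} = ℝ[t, e^{±αt}, e^{±βt}]` is closed under the integration operator
`I_t(P) = ∫₀ᵗ P(τ) dτ`. -/
theorem integral_mem_adjoin_exp (α β : ℝ) (P : ℝ → ℝ)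
    (hP : P ∈ Algebra.adjoin ℝ
      ({fun t => t, fun t => Real.exp (α * t), fun t => Real.exp (-α * t),
        fun t => Real.exp (β * t), fun t => Real.exp (-β * t)} : Set (ℝ → ℝ))) :
    (fun t => ∫ τ in (0 : ℝ)..t, P τ) ∈ Algebra.adjoin ℝ
      ({fun t => t, fun t => Real.exp (α * t), fun t => Real.exp (-α * t),
        fun t => Real.exp (β * t), fun t => Real.exp (-β * t)} : Set (ℝ → ℝ)) := by
  rw [adjoin_exp_eq_adjoin_expMonomials] at hP ⊢
  exact primitive_mem_adjoin_expMonomials _ hP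
end

section
/- Let N ∈ ℕ and, for each i = 1,…,N, let p_i and q_i be real polynomials in two variables with q_i not identically zero, let j_i ∈ ℕ and n_i, m_i ∈ ℤ. Define S = {(α,β) ∈ ℝ² : q_i(α,β) ≠ 0 for all i} and, for (α,β) ∈ S and t ∈ ℝ, P(α,β;t) = Σ_{i=1}^N (p_i(α,β)/q_i(α,β)) · t^{j_i} · e^{(n_i α + m_i β)t}. Suppose g : ℝ → ℝ is such that for every t ∈ ℝ, P(α,β;t) tends to g(t) as (α,β) tends to (0,0) within S. Then g is a polynomial function, i.e. there is a real polynomial p with g(t) = p(t) for all t. -/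
/-!
Restrict to a ray `s ↦ s • v` on which no denominator `q_i` vanishes identically. Along it,
after clearing denominators, `P(s • v; t) = F_t(s) / (s ^ ν R(s))` with `R(0) ≠ 0` and
`F_t(s) = ∑ B_i(s) t^{j_i} e^{c_i t s}` for polynomials `B_i` independent of `t`. Hence
`F_t(s) / s ^ ν → g(t) R(0)`. Replacing each exponential by its Taylor polynomial of order `ν`
changes `F_t` by `o(s ^ ν)`, and for a polynomial such a limit must be its coefficient of `s ^ ν`;
that coefficient is a polynomial in `t`.
-/

open Filter Topology Polynomial Asymptotics Finset
open scoped Nat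

lemma Finset.sum_div_eq_sum_mul_prod_erase_div_prod {ι K : Type*} [Field K] [DecidableEq ι]
    (s : Finset ι) (a b : ι → K) (hb : ∀ i ∈ s, b i ≠ 0) :
    ∑ i ∈ s, a i / b i = (∑ i ∈ s, a i * ∏ k ∈ s.erase i, b k) / ∏ i ∈ s, b i := by
  rw [sum_div]
  refine sum_congr rfl fun i hi => ?_
  have hi' : ∏ k ∈ s.erase i, b k ≠ 0 := prod_ne_zero_iff.2 fun k hk => hb k (mem_of_mem_erase hk)
  rw [← mul_prod_erase s b hi, mul_div_mul_right _ _ hi']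

lemma MvPolynomial.exists_forall_eval_ne_zero {σ ι R : Type*} [CommRing R] [IsDomain R]
    [Infinite R] [Fintype ι] (q : ι → MvPolynomial σ R) (hq : ∀ i, q i ≠ 0) :
    ∃ x, ∀ i, eval x (q i) ≠ 0 := by
  by_contra! h
  refine (prod_ne_zero_iff.2 fun i _ => hq i : ∏ i, q i ≠ 0) (MvPolynomial.funext fun x => ?_)
  obtain ⟨i, hi⟩ := h x
  rw [eval_prod, map_zero]
  exact prod_eq_zero (mem_univ i) hi

lemma MvPolynomial.eval_aeval_C_mul_X {σ R : Type*} [CommRing R] (v : σ → R)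
    (p : MvPolynomial σ R) (s : R) :
    (aeval (fun k => Polynomial.C (v k) * Polynomial.X) p).eval s = eval (fun k => v k * s) p := by
  have h : (Polynomial.evalRingHom s).comp (algebraMap R R[X]) = RingHom.id R := by ext; simp
  rw [aeval_def, polynomial_eval_eval₂, h]
  simp only [Polynomial.eval_mul, Polynomial.eval_C, Polynomial.eval_X]
  rfl

lemma Polynomial.exists_eq_X_pow_mul_eval_zero_ne_zero {R : Type*} [CommRing R] {p : R[X]}
    (hp : p ≠ 0) : ∃ (ν : ℕ) (q : R[X]), p = X ^ ν * q ∧ q.eval 0 ≠ 0 := by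
  obtain ⟨q, hpq, hq⟩ := exists_eq_pow_rootMultiplicity_mul_and_not_dvd p hp 0
  exact ⟨_, q, by simpa using hpq, by simpa [X_dvd_iff, coeff_zero_eq_eval_zero] using hq⟩

lemma Polynomial.eventually_forall_eval_ne_zero {ι : Type*} [Finite ι] (Q : ι → ℝ[X])
    (hQ : ∀ i, Q i ≠ 0) : ∀ᶠ s in 𝓝[>] 0, ∀ i, (Q i).eval s ≠ 0 :=
  eventually_all.2 fun i => (eventually_cofinite_not_isRoot (hQ i)).filter_mono
    ((nhdsGT_le_nhdsNE 0).trans (nhdsNE_le_cofinite 0))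

namespace Polynomial

lemma tendsto_eval_X_pow_mul_div_pow (r : ℝ[X]) (ν : ℕ) :
    Tendsto (fun s => (X ^ ν * r).eval s / s ^ ν) (𝓝[>] 0) (𝓝 ((X ^ ν * r).coeff ν)) := by
  rw [coeff_X_pow_mul', if_pos le_rfl, Nat.sub_self, coeff_zero_eq_eval_zero]
  refine (r.continuous.tendsto 0).mono_left nhdsWithin_le_nhds |>.congr' ?_
  filter_upwards [self_mem_nhdsWithin] with s hs
  rw [eval_mul, eval_pow, eval_X, mul_div_cancel_left₀ _ (pow_ne_zero _ hs.ne')]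

lemma X_pow_dvd_and_coeff_eq_of_tendsto_eval_div_pow {p : ℝ[X]} {ν : ℕ} {L : ℝ}
    (h : Tendsto (fun s => p.eval s / s ^ ν) (𝓝[>] 0) (𝓝 L)) : X ^ ν ∣ p ∧ p.coeff ν = L := by
  induction ν generalizing L with
  | zero =>
    simpa using tendsto_nhds_unique (tendsto_eval_X_pow_mul_div_pow p 0) (by simpa using h)
  | succ ν ih =>
    have h₀ : Tendsto (fun s => p.eval s / s ^ ν) (𝓝[>] 0) (𝓝 0) := by
      have hs : Tendsto (fun s : ℝ => s) (𝓝[>] 0) (𝓝 0) :=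
        tendsto_nhdsWithin_of_tendsto_nhds tendsto_id
      refine (mul_zero L ▸ h.mul hs).congr' ?_
      filter_upwards [self_mem_nhdsWithin] with s hs
      rw [pow_succ, ← div_div, div_mul_cancel₀ _ hs.ne']
    obtain ⟨⟨r, rfl⟩, hr⟩ := ih h₀
    obtain ⟨r, rfl⟩ : X ∣ r := X_dvd_iff.mpr (by simpa [coeff_X_pow_mul'] using hr)
    rw [← mul_assoc, ← pow_succ] at h ⊢
    exact ⟨dvd_mul_right _ _, tendsto_nhds_unique (tendsto_eval_X_pow_mul_div_pow r _) h⟩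

end Polynomial

lemma Real.exp_mul_sub_sum_range_succ_isLittleO_pow (c : ℝ) (ν : ℕ) :
    (fun s => Real.exp (c * s) - ∑ k ∈ range (ν + 1), (c * s) ^ k / k !) =o[𝓝 0] (· ^ ν) := by
  have hc : Tendsto (fun s : ℝ => c * s) (𝓝 0) (𝓝 0) := by
    simpa using (continuous_const_mul c).tendsto 0
  refine ((Real.exp_sub_sum_range_succ_isLittleO_pow ν).comp_tendsto hc).trans_isBigO ?_
  simpa [Function.comp_def, mul_pow] using isBigO_const_mul_self (c ^ ν) (· ^ ν) (𝓝 (0 : ℝ))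

lemma eq_sum_coeff_of_tendsto_sum_mul_exp_div_pow {ι : Type*} [Fintype ι] (B : ι → ℝ[X])
    (c : ι → ℝ) (ν : ℕ) {L : ℝ}
    (h : Tendsto (fun s => (∑ i, (B i).eval s * Real.exp (c i * s)) / s ^ ν) (𝓝[>] 0) (𝓝 L)) :
    L = ∑ i, ∑ k ∈ range (ν + 1), c i ^ k / k ! * (B i).coeff (ν - k) := by
  set T : ℝ[X] := ∑ i, B i * ∑ k ∈ range (ν + 1), C (c i ^ k / k !) * X ^ k
  have hT (s : ℝ) : T.eval s = ∑ i, (B i).eval s * ∑ k ∈ range (ν + 1), (c i * s) ^ k / k ! := by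
    simp only [T, eval_finsetSum, eval_mul, eval_C, eval_pow, eval_X, mul_pow, div_mul_eq_mul_div]
  have hrem :
      (fun s => (∑ i, (B i).eval s * Real.exp (c i * s)) - T.eval s) =o[𝓝 0] (· ^ ν) := by
    simp only [hT, ← sum_sub_distrib, ← mul_sub]
    refine IsLittleO.fun_sum fun i _ => ?_
    simpa using ((B i).continuous.tendsto 0).isBigO_one (F := ℝ) |>.mul_isLittleO
      (Real.exp_mul_sub_sum_range_succ_isLittleO_pow (c i) ν)
  have hT' : Tendsto (fun s => T.eval s / s ^ ν) (𝓝[>] 0) (𝓝 L) := by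
    simpa [sub_div] using h.sub (hrem.tendsto_div_nhds_zero.mono_left nhdsWithin_le_nhds)
  rw [← (X_pow_dvd_and_coeff_eq_of_tendsto_eval_div_pow hT').2]
  simp only [T, finsetSum_coeff, mul_sum]
  refine sum_congr rfl fun i _ => sum_congr rfl fun k hk => ?_
  rw [mul_left_comm, ← mul_assoc, coeff_mul_X_pow', coeff_C_mul,
    if_pos (Nat.lt_succ_iff.mp (mem_range.mp hk))]

theorem exists_polynomial_eq_of_tendsto_sum_div_mul_exp {ι : Type*} [Fintype ι]
    (P Q : ι → ℝ[X]) (hQ : ∀ i, Q i ≠ 0) (j : ι → ℕ) (c : ι → ℝ) {g : ℝ → ℝ}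
    (hg : ∀ t, Tendsto (fun s => ∑ i, (P i).eval s / (Q i).eval s * t ^ j i *
      Real.exp (c i * t * s)) (𝓝[>] 0) (𝓝 (g t))) :
    ∃ r : ℝ[X], ∀ t, g t = r.eval t := by
  classical
  obtain ⟨ν, R, hQR, hR⟩ :=
    exists_eq_X_pow_mul_eval_zero_ne_zero (prod_ne_zero_iff.2 fun i _ => hQ i : ∏ i, Q i ≠ 0)
  set A : ι → ℝ[X] := fun i => P i * ∏ k ∈ univ.erase i, Q k
  refine ⟨C (R.eval 0)⁻¹ * ∑ i, ∑ k ∈ range (ν + 1),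
    C (c i ^ k / k ! * (A i).coeff (ν - k)) * X ^ (j i + k), fun t => ?_⟩
  have hlim : Tendsto
      (fun s => (∑ i, (C (t ^ j i) * A i).eval s * Real.exp (c i * t * s)) / s ^ ν)
      (𝓝[>] 0) (𝓝 (g t * R.eval 0)) := by
    refine ((hg t).mul ((R.continuous.tendsto 0).mono_left nhdsWithin_le_nhds)).congr' ?_
    filter_upwards [eventually_forall_eval_ne_zero Q hQ] with s hs
    have hQs : (X ^ ν * R).eval s ≠ 0 := by
      rw [← hQR, eval_prod]
      exact prod_ne_zero_iff.2 fun i _ => hs i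
    rw [eval_mul, eval_pow, eval_X] at hQs
    simp only [div_mul_eq_mul_div _ ((Q _).eval s)]
    rw [sum_div_eq_sum_mul_prod_erase_div_prod _ _ _ fun i _ => hs i, ← eval_prod, hQR,
      eval_mul, eval_pow, eval_X, div_mul_eq_mul_div,
      mul_div_mul_right _ _ (right_ne_zero_of_mul hQs)]
    simp only [A, eval_mul, eval_C, eval_prod]
    congr 1
    exact sum_congr rfl fun i _ => by ring
  have key := eq_sum_coeff_of_tendsto_sum_mul_exp_div_pow _ _ ν hlim
  rw [eval_mul, eval_C, eq_inv_mul_iff_mul_eq₀ hR, mul_comm, key]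
  simp only [eval_finsetSum, eval_mul, eval_C, eval_pow, eval_X, coeff_C_mul]
  exact sum_congr rfl fun i _ => sum_congr rfl fun k _ => by ring

/-- If an element `P(α,β;t)` of the ring `R_{α,β}` (a linear combination of terms
`f(α,β) t^j e^{(n₁α + n₂β)t}` with rational coefficients `f = p/q`) has a pointwise limit
`g(t)` as `(α,β) → (0,0)` (within the set where the denominators do not vanish), then the
limit `g` is a polynomial in `t`. -/
theorem limit_of_R_element_is_polynomial (N : ℕ)
    (p q : Fin N → MvPolynomial (Fin 2) ℝ) (hq : ∀ i, q i ≠ 0)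
    (j : Fin N → ℕ) (n m : Fin N → ℤ)
    (S : Set (ℝ × ℝ)) (hS : S = {v | ∀ i, MvPolynomial.eval ![v.1, v.2] (q i) ≠ 0})
    (P : ℝ × ℝ → ℝ → ℝ)
    (hP : ∀ v t, P v t = ∑ i, (MvPolynomial.eval ![v.1, v.2] (p i) /
        MvPolynomial.eval ![v.1, v.2] (q i)) * t ^ j i *
        Real.exp (((n i : ℝ) * v.1 + (m i : ℝ) * v.2) * t))
    (g : ℝ → ℝ)
    (hg : ∀ t, Tendsto (fun v => P v t) (nhdsWithin ((0, 0) : ℝ × ℝ) S) (nhds (g t))) :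
    ∃ r : Polynomial ℝ, ∀ t, g t = r.eval t := by
  obtain ⟨v, hv⟩ := MvPolynomial.exists_forall_eval_ne_zero q hq
  set restrict : MvPolynomial (Fin 2) ℝ → ℝ[X] :=
    fun r => MvPolynomial.aeval (fun k => C (v k) * X) r
  have hrestrict (r : MvPolynomial (Fin 2) ℝ) (s : ℝ) :
      (restrict r).eval s = MvPolynomial.eval ![v 0 * s, v 1 * s] r := by
    rw [MvPolynomial.eval_aeval_C_mul_X]
    congr
    ext k
    fin_cases k <;> rfl
  have hQ (i : Fin N) : restrict (q i) ≠ 0 := fun h => hv i <| by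
    simpa [h, restrict] using (MvPolynomial.eval_aeval_C_mul_X v (q i) 1).symm
  have hray : Tendsto (fun s : ℝ => (v 0 * s, v 1 * s)) (𝓝[>] 0) (𝓝[S] (0, 0)) := by
    refine tendsto_nhdsWithin_iff.2 ⟨?_, ?_⟩
    · refine tendsto_nhdsWithin_of_tendsto_nhds ?_
      simpa using ((continuous_const_mul (v 0)).prodMk (continuous_const_mul (v 1))).tendsto 0
    · filter_upwards [eventually_forall_eval_ne_zero _ hQ] with s hs
      simpa [hS, hrestrict] using hs
  refine exists_polynomial_eq_of_tendsto_sum_div_mul_exp (fun i => restrict (p i))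
    (fun i => restrict (q i)) hQ j (fun i => n i * v 0 + m i * v 1) fun t => ?_
  refine ((hg t).comp hray).congr fun s => ?_
  simp only [Function.comp_apply, hP, hrestrict]
  exact sum_congr rfl fun i _ => by ring_nf
end

section
/- (Weierstrass division, formal category.) Let σ be a finite type and let R = ℝ⟦u₂,…⟧ denote the ring of multivariate formal power series over ℝ in variables indexed by σ, so that a formal power series in the variables (u₁, u_σ) is an element of R⟦u₁⟧, the ring of formal power series in u₁ with coefficients in R. Let f ∈ R⟦u₁⟧ and let f̄ ∈ ℝ⟦u₁⟧ be the series obtained from f by applying the constant-coefficient homomorphism R → ℝ to each coefficient (i.e. f̄(u₁) = f(u₁, 0)). Assume f̄ = u₁^m · ḡ for some m ∈ ℕ and some ḡ ∈ ℝ⟦u₁⟧ with ḡ(0) ≠ 0 (equivalently, f̄ has order exactly m). Then for every F ∈ R⟦u₁⟧ there exist a unique q ∈ R⟦u₁⟧ and a unique polynomial r ∈ R[u₁] of degree strictly less than m such that F = r + q·f. -/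
/-!
The coefficient ring `R = ℝ⟦u_σ⟧` is a local ring whose maximal ideal is the kernel of the
constant coefficient; for finite `σ` it is generated by the variables, so `R` is complete for it.
The hypothesis on `f` says that the image of `f` in `(R ⧸ 𝔪)⟦u₁⟧ = ℝ⟦u₁⟧` has order `m`, and the
theorem is then Weierstrass division over a complete local ring.
-/

open PowerSeries

namespace MvPowerSeries

variable {σ R k : Type*}

theorem mem_span_range_X_of_constantCoeff_eq_zero [CommSemiring R] [Finite σ]
    {f : MvPowerSeries σ R} (hf : constantCoeff f = 0) : f ∈ Ideal.span (Set.range X) := by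
  classical
  have := Fintype.ofFinite σ
  -- Peel off the monomials divisible by one variable at a time.
  suffices ∀ s : Finset σ, ∀ f : MvPowerSeries σ R,
      (∀ d : σ →₀ ℕ, (∀ i ∈ s, d i = 0) → coeff d f = 0) → f ∈ Ideal.span (Set.range X) by
    refine this Finset.univ f fun d hd => ?_
    rwa [show d = 0 from Finsupp.ext fun i => hd i (Finset.mem_univ i), coeff_zero_eq_constantCoeff]
  intro s
  induction s using Finset.induction_on with
  | empty =>
    intro f hf
    rw [show f = 0 from ext fun d => hf d (by simp)]
    exact zero_mem _
  | insert a s _ ih =>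
    intro f hf
    let fFree : MvPowerSeries σ R := fun d => if d a = 0 then coeff d f else 0
    let fDiv : MvPowerSeries σ R := fun d => if d a = 0 then 0 else coeff d f
    have coeff_fFree (d) : coeff d fFree = if d a = 0 then coeff d f else 0 := rfl
    have coeff_fDiv (d) : coeff d fDiv = if d a = 0 then 0 else coeff d f := rfl
    have hsplit : f = fDiv + fFree := ext fun d => by
      rw [map_add, coeff_fFree, coeff_fDiv]
      split_ifs <;> simp
    have hdvd : X a ∣ fDiv := X_dvd_iff.2 fun d hd => by rw [coeff_fDiv, if_pos hd]
    have hfree : fFree ∈ Ideal.span (Set.range X) := ih fFree fun d hd => by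
      rw [coeff_fFree]
      split_ifs with hda
      · exact hf d (Finset.forall_mem_insert _ _ _ |>.2 ⟨hda, hd⟩)
      · rfl
    rw [hsplit]
    exact add_mem (Ideal.mem_of_dvd _ hdvd (Ideal.subset_span ⟨a, rfl⟩)) hfree

theorem maximalIdeal_eq_ker_constantCoeff [Field k] :
    IsLocalRing.maximalIdeal (MvPowerSeries σ k) = RingHom.ker constantCoeff :=
  (IsLocalRing.eq_maximalIdeal <| RingHom.ker_isMaximal_of_surjective _
    fun a => ⟨C a, constantCoeff_C a⟩).symm

theorem maximalIdeal_eq_span_range_X [Field k] [Finite σ] :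
    IsLocalRing.maximalIdeal (MvPowerSeries σ k) = Ideal.span (Set.range X) := by
  rw [maximalIdeal_eq_ker_constantCoeff]
  refine le_antisymm (fun f hf => mem_span_range_X_of_constantCoeff_eq_zero hf) ?_
  exact Ideal.span_le.2 (Set.range_subset_iff.2 fun i => by simp)

instance [Field k] [Finite σ] :
    IsAdicComplete (IsLocalRing.maximalIdeal (MvPowerSeries σ k)) (MvPowerSeries σ k) :=
  (maximalIdeal_eq_span_range_X (σ := σ) (k := k)) ▸ inferInstance

end MvPowerSeries

namespace PowerSeries

theorem order_map_eq_order_map_of_ker_eq {A B C : Type*} [Semiring A] [Semiring B] [Semiring C]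
    {φ : A →+* B} {ψ : A →+* C} (h : RingHom.ker φ = RingHom.ker ψ) (f : A⟦X⟧) :
    (f.map φ).order = (f.map ψ).order := by
  have hcoeff (n : ℕ) : coeff n (f.map φ) = 0 ↔ coeff n (f.map ψ) = 0 := by
    simp only [coeff_map, ← RingHom.mem_ker, h]
  exact le_antisymm
    (le_order _ _ fun i hi => (hcoeff i).1 (coeff_of_lt_order i hi))
    (le_order _ _ fun i hi => (hcoeff i).2 (coeff_of_lt_order i hi))

end PowerSeries

/-- Weierstrass division in the formal category: if the restriction `f̄(u₁) = f(u₁,0)` of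
`f ∈ R⟦u₁⟧` (where `R = ℝ⟦u_σ⟧`) has order exactly `m`, i.e. `f̄ = u₁^m ḡ` with `ḡ(0) ≠ 0`,
then every `F ∈ R⟦u₁⟧` can be uniquely written as `F = r + q f` with `q ∈ R⟦u₁⟧` and
`r ∈ R[u₁]` a polynomial of degree `< m`. -/
theorem weierstrass_division_formal (σ : Type) [Finite σ] (m : ℕ)
    (f : PowerSeries (MvPowerSeries σ ℝ))
    (hf : ∃ g : PowerSeries ℝ, PowerSeries.constantCoeff (R := ℝ) g ≠ 0 ∧
      PowerSeries.map (MvPowerSeries.constantCoeff (σ := σ) (R := ℝ)) f = PowerSeries.X ^ m * g) :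
    ∀ F : PowerSeries (MvPowerSeries σ ℝ),
      ∃! qr : PowerSeries (MvPowerSeries σ ℝ) × Polynomial (MvPowerSeries σ ℝ),
        qr.2.degree < (m : WithBot ℕ) ∧
        F = (qr.2 : PowerSeries (MvPowerSeries σ ℝ)) + qr.1 * f := by
  intro F
  obtain ⟨g, hg, hfg⟩ := hf
  have hg0 : g.order = 0 := not_not.1 (mt order_ne_zero_iff_constCoeff_eq_zero.1 hg)
  have horder : (f.map (IsLocalRing.residue _)).order = m := by
    rw [order_map_eq_order_map_of_ker_eq (ψ := MvPowerSeries.constantCoeff)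
        (by rw [IsLocalRing.ker_residue, MvPowerSeries.maximalIdeal_eq_ker_constantCoeff]),
      hfg, order_mul, order_X_pow, hg0, add_zero]
  have hf0 : f.map (IsLocalRing.residue _) ≠ 0 := fun h => by simp [h] at horder
  have hdeg : (f.map (Ideal.Quotient.mk (IsLocalRing.maximalIdeal _))).order.toNat = m :=
    (congrArg ENat.toNat horder).trans (ENat.toNat_natCast m)
  refine ⟨(F /ʷ f, F %ʷ f), ?_, ?_⟩
  · obtain ⟨hlt, hF⟩ := F.isWeierstrassDivision_weierstrassDiv_weierstrassMod hf0
    exact ⟨hdeg ▸ hlt, hF.trans (by ring)⟩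
  · rintro ⟨q, r⟩ ⟨hr, hF⟩
    have hdiv : F.IsWeierstrassDivision f q r := ⟨hdeg ▸ hr, hF.trans (by ring)⟩
    obtain ⟨rfl, rfl⟩ := hdiv.unique hf0
    rfl
end

section
/- Fix α, β, c ∈ ℝ, m ∈ ℕ, x₀ ∈ ℝ with 0 < x₀, and y₀, z₀ ∈ ℝ; set γ = α − mβ and let ω(γ,x) = (x^{−γ} − 1)/γ if γ ≠ 0 and ω(0,x) = −ln x. Suppose φ_x, φ_y, φ_z : ℝ → ℝ satisfy, for every t ∈ ℝ, φ_x′(t) = φ_x(t), φ_y′(t) = −α φ_y(t) + c φ_z(t)^m, φ_z′(t) = −β φ_z(t), together with the initial condition (φ_x(0), φ_y(0), φ_z(0)) = (x₀, y₀, z₀). Then at the transition time t₁ = −ln x₀ one has φ_x(t₁) = 1, φ_y(t₁) = x₀^{α}( y₀ + c z₀^m ω(γ, x₀) ), and φ_z(t₁) = x₀^{β} z₀. -/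
/-!
Each equation is linear and is solved by variation of constants: `ż = −βz` and `ẋ = x` give
`z = z₀ e^{−βt}` and `x = x₀ eᵗ`, and then `ẏ = −αy + c z₀^m e^{−mβt}` gives
`y = e^{−αt} (y₀ + c z₀^m ∫₀ᵗ e^{γs} ds)` with `γ = α − mβ`. At `t = −ln x₀` the integral equals
`ω(γ, x₀)`, also when `γ = 0`, and `e^{−kt} = x₀^k`.
-/

open Real

/-- The compensator `ω(γ, x)`; it is `∫₀^{−ln x} e^{γs} ds`, including the case `γ = 0`. -/
noncomputable def compensator (γ x : ℝ) : ℝ :=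
  if γ ≠ 0 then (x ^ (-γ) - 1) / γ else -log x

theorem compensator_one (γ : ℝ) : compensator γ 1 = 0 := by
  simp [compensator]

theorem hasDerivAt_compensator_exp_neg (γ t : ℝ) :
    HasDerivAt (fun s => compensator γ (exp (-s))) (exp (γ * t)) t := by
  by_cases hγ : γ = 0
  · simpa [compensator, hγ] using hasDerivAt_id' t
  · have hfun : (fun s => compensator γ (exp (-s))) = fun s => (exp (γ * s) - 1) / γ := by
      funext s
      rw [compensator, if_pos hγ, ← exp_mul]
      ring_nf
    rw [hfun]
    refine ((((hasDerivAt_id' t).const_mul γ).exp.sub_const 1).div_const γ).congr_deriv ?_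
    field_simp

theorem exp_neg_mul_neg_log {x : ℝ} (hx : 0 < x) (k : ℝ) : exp (-k * -log x) = x ^ k := by
  rw [rpow_def_of_pos hx]
  ring_nf

theorem linearODE_solution_eq {f h H : ℝ → ℝ} {k : ℝ}
    (hf : ∀ t, HasDerivAt f (-k * f t + h t) t)
    (hH : ∀ t, HasDerivAt H (exp (k * t) * h t) t) (t : ℝ) :
    f t = (f 0 + (H t - H 0)) * exp (-k * t) := by
  have hconst : ∀ s, HasDerivAt (fun u => f u * exp (k * u) - H u) 0 s := fun s => by
    refine (((hf s).mul ((hasDerivAt_id' s).const_mul k).exp).sub (hH s)).congr_deriv ?_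
    ring
  have hft := is_const_of_deriv_eq_zero (fun s => (hconst s).differentiableAt)
    (fun s => (hconst s).deriv) t 0
  simp only [mul_zero, exp_zero, mul_one] at hft
  rw [show f 0 + (H t - H 0) = f t * exp (k * t) by linarith, mul_assoc, ← exp_add]
  simp

theorem linearODE_homogeneous_solution_eq {f : ℝ → ℝ} {k : ℝ}
    (hf : ∀ t, HasDerivAt f (-k * f t) t) (t : ℝ) : f t = f 0 * exp (-k * t) := by
  simpa using linearODE_solution_eq (h := 0) (H := 0) (by simpa using hf) (by simp) t

theorem resonant_solution_eq {φy : ℝ → ℝ} {α β c z₀ : ℝ} (m : ℕ)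
    (hφy : ∀ t, HasDerivAt φy (-α * φy t + c * (z₀ * exp (-β * t)) ^ m) t) (t : ℝ) :
    φy t = (φy 0 + c * z₀ ^ m * compensator (α - m * β) (exp (-t))) * exp (-α * t) := by
  have hH : ∀ s, HasDerivAt (fun u => c * z₀ ^ m * compensator (α - m * β) (exp (-u)))
      (exp (α * s) * (c * (z₀ * exp (-β * s)) ^ m)) s := fun s => by
    refine ((hasDerivAt_compensator_exp_neg (α - m * β) s).const_mul (c * z₀ ^ m)).congr_deriv ?_
    rw [mul_pow, ← exp_nat_mul, sub_mul, sub_eq_add_neg, exp_add]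
    ring_nf
  rw [linearODE_solution_eq hφy hH t, neg_zero, exp_zero, compensator_one]
  ring

/-- The Dulac map of the resonant normal form system `ẋ = x`, `ẏ = −αy + c z^m`, `ż = −βz`:
a solution starting at `(x₀, y₀, z₀)` with `0 < x₀` reaches the section `{x = 1}` at time
`t₁ = −ln x₀`, where `y = x₀^α (y₀ + c z₀^m ω(γ, x₀))` and `z = x₀^β z₀`,
with `γ = α − mβ` and `ω` the compensator function. -/
theorem dulac_map_resonant_normal_form (α β c : ℝ) (m : ℕ)
    (x₀ : ℝ) (hx₀ : 0 < x₀) (y₀ z₀ : ℝ) (γ : ℝ) (hγ : γ = α - m * β)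
    (ω : ℝ → ℝ → ℝ)
    (hω : ∀ g x : ℝ, ω g x = if g ≠ 0 then (x ^ (-g) - 1) / g else -Real.log x)
    (φx φy φz : ℝ → ℝ)
    (hode : ∀ t : ℝ,
      HasDerivAt φx (φx t) t ∧
      HasDerivAt φy (-α * φy t + c * φz t ^ m) t ∧
      HasDerivAt φz (-β * φz t) t)
    (hinit : φx 0 = x₀ ∧ φy 0 = y₀ ∧ φz 0 = z₀) :
    φx (-Real.log x₀) = 1 ∧
    φy (-Real.log x₀) = x₀ ^ α * (y₀ + c * z₀ ^ m * ω γ x₀) ∧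
    φz (-Real.log x₀) = x₀ ^ β * z₀ := by
  obtain ⟨hx0, hy0, hz0⟩ := hinit
  have hω' : ω = compensator := funext₂ hω
  have hz : ∀ t, φz t = z₀ * exp (-β * t) :=
    hz0 ▸ linearODE_homogeneous_solution_eq fun t => (hode t).2.2
  have hx := linearODE_homogeneous_solution_eq (k := -1) fun t => by simpa using (hode t).1
  have hy := resonant_solution_eq m fun t => by simpa only [hz] using (hode t).2.1
  refine ⟨?_, ?_, ?_⟩
  · rw [hx, exp_neg_mul_neg_log hx₀, rpow_neg_one, hx0, mul_inv_cancel₀ hx₀.ne']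
  · rw [hy, exp_neg_mul_neg_log hx₀, neg_neg, exp_log hx₀, hy0, hω', hγ]
    ring
  · rw [hz, exp_neg_mul_neg_log hx₀, mul_comm]
end

section
/- Let G : ℝ → ℝ be a C^∞ function that is flat at 0, i.e. G and all of its iterated derivatives vanish at 0, and let m ∈ ℕ. Define h : ℝ → ℝ by h(x) = G(x)/x^m for x ≠ 0 and h(0) = 0. Then h is C^∞ on ℝ and h is again flat at 0 (all iterated derivatives of h vanish at 0). -/
/-! Write `q_m G x = G x / x ^ m`. Since a flat `G` is `o(x ^ k)` for every `k` (Taylor), `q_m G`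
is differentiable at `0` with derivative `0`, and everywhere
`(q_m G)' = q_m G' - m • q_(m+1) G`. The family of all `q_m G` with `G` smooth and flat is thus
closed under differentiation, so an induction on `n`, uniform in `m` and `G`, shows that each
`q_m G` is `C^n` and has vanishing `n`-th derivative at `0`. -/

open Filter Topology Asymptotics
open scoped ContDiff

theorem isLittleO_pow_of_iteratedDeriv_eq_zero {E : Type*} [NormedAddCommGroup E]
    [NormedSpace ℝ E] {f : ℝ → E} {n : ℕ} (hf : ContDiff ℝ n f)
    (hflat : ∀ k ≤ n, iteratedDeriv k f 0 = 0) : f =o[𝓝 0] (· ^ n) := by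
  have htaylor : ∀ k ≤ n, ∀ x, taylorWithinEval f k Set.univ 0 x = 0 := by
    intro k hk x
    induction k with
    | zero => simpa using hflat 0 (Nat.zero_le n)
    | succ k ih => simp [ih (by omega), hflat (k + 1) hk]
  simpa [htaylor n le_rfl] using taylor_isLittleO_univ (x₀ := 0) hf

section

variable {G : ℝ → ℝ}

theorem tendsto_div_pow_of_flat (hG : ContDiff ℝ ∞ G) (hflat : ∀ n, iteratedDeriv n G 0 = 0)
    (m : ℕ) : Tendsto (fun x => G x / x ^ m) (𝓝 0) (𝓝 0) :=
  (isLittleO_pow_of_iteratedDeriv_eq_zero (hG.of_le (by exact_mod_cast le_top))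
    fun k _ => hflat k).tendsto_div_nhds_zero

theorem hasDerivAt_div_pow_zero_of_flat (hG : ContDiff ℝ ∞ G)
    (hflat : ∀ n, iteratedDeriv n G 0 = 0) (m : ℕ) : HasDerivAt (fun x => G x / x ^ m) 0 0 := by
  have hG0 : G 0 = 0 := by simpa using hflat 0
  rw [hasDerivAt_iff_tendsto_slope]
  refine (tendsto_div_pow_of_flat hG hflat (m + 1)).mono_left nhdsWithin_le_nhds
    |>.congr fun x => ?_
  rw [slope_def_field, hG0, zero_div, sub_zero, sub_zero, div_div, pow_succ]

theorem hasDerivAt_div_pow_of_flat (hG : ContDiff ℝ ∞ G)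
    (hflat : ∀ n, iteratedDeriv n G 0 = 0) (m : ℕ) (x : ℝ) :
    HasDerivAt (fun x => G x / x ^ m) (deriv G x / x ^ m - m * (G x / x ^ (m + 1))) x := by
  rcases eq_or_ne x 0 with rfl | hx
  · have hG0 : G 0 = 0 := by simpa using hflat 0
    have hG'0 : deriv G 0 = 0 := by simpa using hflat 1
    simpa [hG0, hG'0] using hasDerivAt_div_pow_zero_of_flat hG hflat m
  · refine ((hG.differentiable (by simp) x).hasDerivAt.fun_div (hasDerivAt_pow m x)
      (pow_ne_zero m hx)).congr_deriv ?_
    rcases m with _ | m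
    · simp
    · rw [Nat.add_sub_cancel]
      field_simp
      ring

theorem deriv_div_pow_of_flat (hG : ContDiff ℝ ∞ G) (hflat : ∀ n, iteratedDeriv n G 0 = 0)
    (m : ℕ) :
    deriv (fun x => G x / x ^ m) = fun x => deriv G x / x ^ m - m * (G x / x ^ (m + 1)) :=
  funext fun x => (hasDerivAt_div_pow_of_flat hG hflat m x).deriv

theorem iteratedDeriv_deriv_eq_zero (hflat : ∀ n, iteratedDeriv n G 0 = 0) (n : ℕ) :
    iteratedDeriv n (deriv G) 0 = 0 := by
  rw [← iteratedDeriv_succ']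
  exact hflat (n + 1)

theorem contDiff_div_pow_of_flat (hG : ContDiff ℝ ∞ G) (hflat : ∀ n, iteratedDeriv n G 0 = 0)
    (m n : ℕ) : ContDiff ℝ n (fun x => G x / x ^ m) := by
  induction n generalizing G m with
  | zero =>
    exact contDiff_zero.mpr (Differentiable.continuous fun x =>
      (hasDerivAt_div_pow_of_flat hG hflat m x).differentiableAt)
  | succ n ih =>
    rw [Nat.cast_succ, contDiff_succ_iff_deriv, deriv_div_pow_of_flat hG hflat]
    refine ⟨fun x => (hasDerivAt_div_pow_of_flat hG hflat m x).differentiableAt, by simp, ?_⟩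
    exact (ih (contDiff_infty_iff_deriv.mp hG).2 (iteratedDeriv_deriv_eq_zero hflat) m).sub
      (contDiff_const.mul (ih hG hflat (m + 1)))

theorem iteratedDeriv_div_pow_zero_of_flat (hG : ContDiff ℝ ∞ G)
    (hflat : ∀ n, iteratedDeriv n G 0 = 0) (m n : ℕ) :
    iteratedDeriv n (fun x => G x / x ^ m) 0 = 0 := by
  induction n generalizing G m with
  | zero => simp [show G 0 = 0 by simpa using hflat 0]
  | succ n ih =>
    have hG' := (contDiff_infty_iff_deriv.mp hG).2
    rw [iteratedDeriv_succ', deriv_div_pow_of_flat hG hflat, iteratedDeriv_fun_sub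
      (contDiff_div_pow_of_flat hG' (iteratedDeriv_deriv_eq_zero hflat) m n).contDiffAt
      (contDiff_const.mul (contDiff_div_pow_of_flat hG hflat (m + 1) n)).contDiffAt,
      iteratedDeriv_const_mul_field, ih hG' (iteratedDeriv_deriv_eq_zero hflat), ih hG hflat]
    simp

end

/-- If `G` is smooth and flat at `0` (all iterated derivatives vanish at `0`) and `m ∈ ℕ`,
then `h(x) = G(x)/x^m` (extended by `h(0) = 0`) is again smooth and flat at `0`. -/
theorem flat_div_pow_smooth_flat (G : ℝ → ℝ) (hG : ContDiff ℝ (⊤ : ℕ∞) G)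
    (hflat : ∀ n : ℕ, iteratedDeriv n G 0 = 0) (m : ℕ)
    (h : ℝ → ℝ) (hh : ∀ x : ℝ, h x = if x = 0 then 0 else G x / x ^ m) :
    ContDiff ℝ (⊤ : ℕ∞) h ∧ ∀ n : ℕ, iteratedDeriv n h 0 = 0 := by
  -- with `x / 0 = 0`, the plain quotient already takes the value `G 0 = 0` at `0`
  have hdiv : h = fun x => G x / x ^ m := by
    funext x
    rw [hh]
    split_ifs with hx
    · simp [hx, show G 0 = 0 by simpa using hflat 0]
    · rfl
  subst hdiv
  exact ⟨contDiff_infty.mpr (contDiff_div_pow_of_flat hG hflat m),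
    iteratedDeriv_div_pow_zero_of_flat hG hflat m⟩
end
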